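/- arXiv:1808.02336 — 4 statements merged into one kernel-verified Lean document; each statement's English description precedes it below -/
import Mathlib

section
/- Let X ~ Bin(n, s) and Y ~ Bin(n-1, s) for n ≥ 1 and s ∈ (0,1). Then for each k ∈ {0, …, n}, |P[X = k] − P[Y = k]| = (|ns − k| / (n(1−s))) · P[X = k]. -/
/-!
The absorption identity `C(n-1, k) · n = C(n, k) · (n - k)` gives
`n (1 - s) P[Y = k] = (n - k) P[X = k]`, so `P[X = k] - P[Y = k] = (k - n s) / (n (1 - s)) · P[X = k]`,
and `P[X = k] ≥ 0` passes through the absolute value.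
-/

/-- The binomial probability mass function: `P[Bin(n,s) = k]`. -/
noncomputable def binomPMF (n : ℕ) (s : ℝ) (k : ℕ) : ℝ :=
  (n.choose k : ℝ) * s ^ k * (1 - s) ^ (n - k)

theorem Nat.cast_choose_mul_succ_eq {R : Type*} [Ring R] (m k : ℕ) :
    (m.choose k : R) * (m + 1) = (m + 1).choose k * ((m + 1 : R) - k) := by
  rcases le_or_gt k (m + 1) with hk | hk
  · have h := congrArg (Nat.cast (R := R)) (Nat.choose_mul_succ_eq m k)
    push_cast [Nat.cast_sub hk] at h
    exact h
  · simp [Nat.choose_eq_zero_of_lt hk, Nat.choose_eq_zero_of_lt (by omega : m < k)]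

theorem binomPMF_nonneg {s : ℝ} (hs₀ : 0 ≤ s) (hs₁ : s ≤ 1) (n k : ℕ) : 0 ≤ binomPMF n s k := by
  unfold binomPMF
  have : 0 ≤ 1 - s := sub_nonneg.mpr hs₁
  positivity

theorem succ_mul_one_sub_mul_binomPMF (m : ℕ) (s : ℝ) (k : ℕ) :
    (m + 1) * (1 - s) * binomPMF m s k = (m + 1 - k) * binomPMF (m + 1) s k := by
  have hchoose := Nat.cast_choose_mul_succ_eq (R := ℝ) m k
  unfold binomPMF
  rcases le_or_gt k m with hkm | hkm
  · rw [show m + 1 - k = m - k + 1 by omega, pow_succ]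
    linear_combination (s ^ k * (1 - s) ^ (m - k) * (1 - s)) * hchoose
  · rw [Nat.choose_eq_zero_of_lt hkm, Nat.cast_zero, zero_mul] at hchoose
    rw [Nat.choose_eq_zero_of_lt hkm]
    linear_combination (s ^ k * (1 - s) ^ (m + 1 - k)) * hchoose

theorem binomPMF_succ_sub_binomPMF {s : ℝ} (hs : s ≠ 1) (m k : ℕ) :
    binomPMF (m + 1) s k - binomPMF m s k
      = (k - (m + 1) * s) / ((m + 1) * (1 - s)) * binomPMF (m + 1) s k := by
  have hne : ((m : ℝ) + 1) * (1 - s) ≠ 0 := mul_ne_zero (by positivity) (sub_ne_zero.mpr hs.symm)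
  rw [div_mul_eq_mul_div, eq_div_iff hne]
  linear_combination -succ_mul_one_sub_mul_binomPMF m s k

theorem binom_diff_ratio_general (n : ℕ) (hn : 1 ≤ n) (s : ℝ) (hs : s ∈ Set.Ioo (0:ℝ) 1)
    (k : ℕ) :
    |binomPMF n s k - binomPMF (n - 1) s k|
      = (|n * s - k| / (n * (1 - s))) * binomPMF n s k := by
  obtain ⟨hs₀, hs₁⟩ := hs
  obtain ⟨m, rfl⟩ := Nat.exists_eq_add_of_le' hn
  have hden : 0 < ((m : ℝ) + 1) * (1 - s) := by have := sub_pos.mpr hs₁; positivity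
  rw [Nat.add_sub_cancel, binomPMF_succ_sub_binomPMF hs₁.ne, abs_mul,
    abs_of_nonneg (binomPMF_nonneg hs₀.le hs₁.le _ _), abs_div, abs_of_pos hden, abs_sub_comm]
  push_cast
  rfl

theorem binom_diff_ratio (n : ℕ) (hn : 1 ≤ n) (s : ℝ) (hs : s ∈ Set.Ioo (0:ℝ) 1)
    (k : ℕ) (hk : k ≤ n) :
    |binomPMF n s k - binomPMF (n - 1) s k|
      = (|n * s - k| / (n * (1 - s))) * binomPMF n s k :=
  binom_diff_ratio_general n hn s hs k
end

section
/- Let X ~ Bin(n, s) and Y ~ Bin(n-1, s) for n ≥ 1 and s ∈ (0,1). Then the total variation distance between the laws of X and Y is at most sqrt(s / (4n(1−s))). -/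
/-!
Total variation is controlled by the χ²-divergence through Cauchy–Schwarz:
`(∑ |p - q|)² ≤ ∑ (p - q)² / q = ∑ p² / q - 1`. For `p = Bin(n-1, s)` and `q = Bin(n, s)` the
ratio `p(k) / q(k) = (n - k) / (n (1 - s))` is linear in `k`, so `∑ p² / q` is an affine function
of the mean `(n - 1) s` of `p`, and the divergence comes out as exactly `s / (n (1 - s))`.
-/

open Finset

theorem sq_sum_abs_sub_le_sum_sq_div_sub_one {ι : Type*} (t : Finset ι) {p q : ι → ℝ}
    (hq : ∀ i ∈ t, 0 < q i) (hp_sum : ∑ i ∈ t, p i = 1) (hq_sum : ∑ i ∈ t, q i = 1) :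
    (∑ i ∈ t, |p i - q i|) ^ 2 ≤ ∑ i ∈ t, p i ^ 2 / q i - 1 := by
  have cauchy_schwarz := sq_sum_div_le_sum_sq_div t (fun i ↦ |p i - q i|) hq
  have expand : ∀ i ∈ t, (p i - q i) ^ 2 / q i = p i ^ 2 / q i - 2 * p i + q i := by
    intro i hi
    field_simp [(hq i hi).ne']
    ring
  simp only [sq_abs, hq_sum, div_one] at cauchy_schwarz
  rw [sum_congr rfl expand, sum_add_distrib, sum_sub_distrib, ← mul_sum, hp_sum, hq_sum]
    at cauchy_schwarz
  linarith

section Binomial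

variable {s : ℝ}

theorem binomPMF_pos (hs : s ∈ Set.Ioo (0 : ℝ) 1) {n k : ℕ} (hk : k ≤ n) :
    0 < binomPMF n s k := by
  have : (0 : ℝ) < 1 - s := sub_pos.2 hs.2
  have : (0 : ℝ) < n.choose k := mod_cast Nat.choose_pos hk
  have := hs.1
  unfold binomPMF
  positivity

theorem binomPMF_eq_zero_of_lt {n k : ℕ} (hk : n < k) : binomPMF n s k = 0 := by
  simp [binomPMF, Nat.choose_eq_zero_of_lt hk]

theorem sum_range_binomPMF (n : ℕ) : ∑ k ∈ range (n + 1), binomPMF n s k = 1 := by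
  have binomial_theorem := (add_pow s (1 - s) n).symm
  rw [add_sub_cancel, one_pow] at binomial_theorem
  rw [← binomial_theorem]
  exact sum_congr rfl fun k _ ↦ by unfold binomPMF; ring

theorem sum_range_succ_succ_binomPMF (n : ℕ) : ∑ k ∈ range (n + 2), binomPMF n s k = 1 := by
  rw [sum_range_succ, binomPMF_eq_zero_of_lt (Nat.lt_succ_self n), add_zero, sum_range_binomPMF]

theorem succ_mul_binomPMF_succ (n k : ℕ) :
    ((k + 1 : ℕ) : ℝ) * binomPMF (n + 1) s (k + 1) = ((n + 1 : ℕ) : ℝ) * s * binomPMF n s k := by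
  have hc : ((n + 1 : ℕ) : ℝ) * n.choose k = (n + 1).choose (k + 1) * ((k + 1 : ℕ) : ℝ) :=
    mod_cast Nat.add_one_mul_choose_eq n k
  unfold binomPMF
  rw [Nat.add_sub_add_right, pow_succ]
  linear_combination (-(s ^ k * s * (1 - s) ^ (n - k))) * hc

theorem sum_range_mul_binomPMF (n : ℕ) :
    ∑ k ∈ range (n + 1), (k : ℝ) * binomPMF n s k = n * s := by
  cases n with
  | zero => simp
  | succ n =>
    rw [sum_range_succ', sum_congr rfl fun k _ ↦ succ_mul_binomPMF_succ n k, ← mul_sum,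
      sum_range_binomPMF]
    simp

theorem sq_binomPMF_div_binomPMF_succ (hs : s ∈ Set.Ioo (0 : ℝ) 1) {n k : ℕ} (hk : k ≤ n) :
    binomPMF n s k ^ 2 / binomPMF (n + 1) s k
      = ((n + 1 - k) / ((n + 1) * (1 - s))) * binomPMF n s k := by
  obtain ⟨j, rfl⟩ : ∃ j, n = k + j := ⟨n - k, by omega⟩
  have hc : ((k + j).choose k : ℝ) * (k + j + 1) = (k + j + 1).choose k * (j + 1) := by
    have := Nat.choose_mul_succ_eq (k + j) k
    rw [show k + j + 1 - k = j + 1 by omega] at this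
    exact_mod_cast this
  have : ((k : ℝ) + j + 1) * (1 - s) ≠ 0 := by
    have := sub_pos.2 hs.2
    positivity
  rw [div_eq_iff (binomPMF_pos hs (by omega)).ne']
  unfold binomPMF
  rw [show k + j - k = j by omega, show k + j + 1 - k = j + 1 by omega]
  push_cast
  rw [div_mul_eq_mul_div, div_mul_eq_mul_div, eq_div_iff this]
  linear_combination ((k + j).choose k : ℝ) * s ^ k * s ^ k * (1 - s) ^ j * (1 - s) ^ j * (1 - s) * hc

theorem sum_range_sq_binomPMF_div_binomPMF_succ (hs : s ∈ Set.Ioo (0 : ℝ) 1) (n : ℕ) :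
    ∑ k ∈ range (n + 2), binomPMF n s k ^ 2 / binomPMF (n + 1) s k
      = 1 + s / ((n + 1) * (1 - s)) := by
  have : (1 : ℝ) - s ≠ 0 := (sub_pos.2 hs.2).ne'
  rw [sum_range_succ, binomPMF_eq_zero_of_lt (Nat.lt_succ_self n), sq, zero_mul, zero_div,
    add_zero, sum_congr rfl fun k hk ↦
      sq_binomPMF_div_binomPMF_succ hs (Nat.lt_succ_iff.1 (mem_range.1 hk))]
  simp only [div_mul_eq_mul_div, ← sum_div, sub_mul, add_mul, sum_sub_distrib, sum_add_distrib,
    ← mul_sum, sum_range_mul_binomPMF, sum_range_binomPMF]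
  field_simp
  ring

end Binomial

/-- Total variation distance between the laws of `Bin(n,s)` and `Bin(n-1,s)`. -/
theorem binom_tv_le (n : ℕ) (hn : 1 ≤ n) (s : ℝ) (hs : s ∈ Set.Ioo (0:ℝ) 1) :
    (1 / 2) * ∑' k : ℕ, |binomPMF n s k - binomPMF (n - 1) s k|
      ≤ Real.sqrt (s / (4 * n * (1 - s))) := by
  obtain ⟨m, rfl⟩ : ∃ m, n = m + 1 := ⟨n - 1, by omega⟩
  rw [Nat.add_sub_cancel]
  have support : ∀ k ∉ range (m + 2), |binomPMF (m + 1) s k - binomPMF m s k| = 0 := by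
    intro k hk
    rw [mem_range, not_lt] at hk
    rw [binomPMF_eq_zero_of_lt (by omega), binomPMF_eq_zero_of_lt (by omega), sub_zero, abs_zero]
  have chi_square_bound :
      (∑ k ∈ range (m + 2), |binomPMF m s k - binomPMF (m + 1) s k|) ^ 2
        ≤ s / ((m + 1) * (1 - s)) := by
    have := sq_sum_abs_sub_le_sum_sq_div_sub_one (range (m + 2))
      (fun k hk ↦ binomPMF_pos hs (Nat.lt_succ_iff.1 (mem_range.1 hk)))
      (sum_range_succ_succ_binomPMF (s := s) m) (sum_range_binomPMF (m + 1))
    rwa [sum_range_sq_binomPMF_div_binomPMF_succ hs, add_sub_cancel_left] at this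
  rw [tsum_eq_sum support]
  simp_rw [abs_sub_comm (binomPMF (m + 1) s _)]
  refine le_abs_self _ |>.trans (Real.abs_le_sqrt ?_)
  push_cast
  calc (1 / 2 * ∑ k ∈ range (m + 2), |binomPMF m s k - binomPMF (m + 1) s k|) ^ 2
      ≤ 1 / 4 * (s / ((m + 1) * (1 - s))) := by nlinarith [chi_square_bound]
    _ = s / (4 * (m + 1) * (1 - s)) := by field_simp
end

section
/- If μ and ν are probability measures on a countable set with Hellinger distance d_H(μ, ν) ≤ 1/2, then for every m ≥ 1/(4·d_H(μ, ν)²), 1 − d_TV(μ^m, ν^m) ≥ exp(−9·m·d_H(μ, ν)²). -/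
/-!
The Bhattacharyya coefficient `ρ(μ, ν) = ∑ √(μ ν)` satisfies `d_H² = 2 - 2ρ`, is multiplicative
under products, `ρ(μ^m, ν^m) = ρ^m`, and controls the overlap from below by Le Cam's inequality
`ρ² ≤ 2 (1 - d_TV)` (Cauchy–Schwarz applied to `√(μ ν) = √(min μ ν) √(max μ ν)`). Hence
`1 - d_TV(μ^m, ν^m) ≥ (1 - d_H²/2)^(2m) / 2`, and for `d_H² ≤ 1/4` one has
`1 - d_H²/2 ≥ exp(-4 d_H²/7)`, while `m d_H² ≥ 1/4` lets the factor `1/2` be absorbed into the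
exponent.
-/

/-- Total variation distance between measures on a countable set. -/
noncomputable def dTV {X : Type*} (μ ν : X → ℝ) : ℝ :=
  (1 / 2) * ∑' x, |μ x - ν x|

/-- Hellinger distance between measures on a countable set. -/
noncomputable def dH {X : Type*} (μ ν : X → ℝ) : ℝ :=
  Real.sqrt (∑' x, (Real.sqrt (μ x) - Real.sqrt (ν x)) ^ 2)

open Real Finset

section Summation

variable {X : Type*} {f g : X → ℝ} {a : ℝ}

theorem hasSum_fin_pi_prod (hf : HasSum f a) (hf0 : ∀ x, 0 ≤ f x) (m : ℕ) :
    HasSum (fun x : Fin m → X => ∏ i, f (x i)) (a ^ m) := by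
  induction m with
  | zero => simp [hasSum_unique]
  | succ m ih =>
    have hsum : Summable fun p : X × (Fin m → X) => f p.1 * ∏ i, f (p.2 i) :=
      hf.summable.mul_of_nonneg (g := fun x : Fin m → X => ∏ i, f (x i)) ih.summable hf0
        fun x => prod_nonneg fun i _ => hf0 _
    have hcons : (fun x : Fin (m + 1) → X => ∏ i, f (x i)) ∘ Fin.consEquiv (fun _ => X) =
        fun p => f p.1 * ∏ i, f (p.2 i) := by
      ext p
      simp [Fin.prod_univ_succ]
    have hprod := hf.mul ih hsum
    rw [pow_succ', ← (Fin.consEquiv fun _ => X).hasSum_iff, hcons]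
    exact hprod

theorem summable_sqrt_mul (hf : Summable f) (hg : Summable g) (hf0 : ∀ x, 0 ≤ f x)
    (hg0 : ∀ x, 0 ≤ g x) : Summable fun x => √(f x * g x) :=
  (hf.add hg).of_nonneg_of_le (fun _ => sqrt_nonneg _) fun x =>
    (sqrt_le_left (add_nonneg (hf0 x) (hg0 x))).2 (by nlinarith [hf0 x, hg0 x])

theorem tsum_sqrt_mul_sqrt_le (hf : Summable f) (hg : Summable g) (hf0 : ∀ x, 0 ≤ f x)
    (hg0 : ∀ x, 0 ≤ g x) : ∑' x, √(f x) * √(g x) ≤ √(∑' x, f x) * √(∑' x, g x) :=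
  tsum_le_of_sum_le' (by positivity) fun s => (sum_sqrt_mul_sqrt_le s hf0 hg0).trans <| by
    gcongr
    · exact hf.sum_le_tsum s fun x _ => hf0 x
    · exact hg.sum_le_tsum s fun x _ => hg0 x

end Summation

noncomputable def bhattacharyya {X : Type*} (μ ν : X → ℝ) : ℝ :=
  ∑' x, √(μ x * ν x)

section ProbabilityVectors

variable {X : Type*} {μ ν : X → ℝ} (hμ0 : ∀ x, 0 ≤ μ x) (hν0 : ∀ x, 0 ≤ ν x)
  (hμ1 : HasSum μ 1) (hν1 : HasSum ν 1)
include hμ0 hν0 hμ1 hν1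

theorem one_sub_dTV_eq_tsum_min : 1 - dTV μ ν = ∑' x, min (μ x) (ν x) := by
  have hmin : Summable fun x => min (μ x) (ν x) :=
    hμ1.summable.of_nonneg_of_le (fun x => le_min (hμ0 x) (hν0 x)) fun x => min_le_left _ _
  have habs : ∀ x, |μ x - ν x| = (μ x + ν x) - 2 * min (μ x) (ν x) := fun x => by
    rcases le_total (μ x) (ν x) with h | h
    · rw [abs_of_nonpos (by linarith), min_eq_left h]; ring
    · rw [abs_of_nonneg (by linarith), min_eq_right h]; ring
  have hsum : HasSum (fun x => |μ x - ν x|) (2 - 2 * ∑' x, min (μ x) (ν x)) := by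
    simpa only [habs, one_add_one_eq_two] using (hμ1.add hν1).sub (hmin.hasSum.mul_left 2)
  rw [dTV, hsum.tsum_eq]
  ring

theorem bhattacharyya_sq_le_two_mul_one_sub_dTV :
    bhattacharyya μ ν ^ 2 ≤ 2 * (1 - dTV μ ν) := by
  set s := ∑' x, min (μ x) (ν x)
  have hmin : Summable fun x => min (μ x) (ν x) :=
    hμ1.summable.of_nonneg_of_le (fun x => le_min (hμ0 x) (hν0 x)) fun x => min_le_left _ _
  have hmax : HasSum (fun x => max (μ x) (ν x)) (2 - s) := by
    simpa only [← min_add_max (μ _), add_sub_cancel_left, one_add_one_eq_two] using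
      (hμ1.add hν1).sub hmin.hasSum
  have hmin0 : 0 ≤ s := tsum_nonneg fun x => le_min (hμ0 x) (hν0 x)
  have hmax0 (x) : 0 ≤ max (μ x) (ν x) := (hμ0 x).trans (le_max_left _ _)
  have hcs : bhattacharyya μ ν ≤ √s * √(2 - s) := by
    have := tsum_sqrt_mul_sqrt_le hmin hmax.summable (fun x => le_min (hμ0 x) (hν0 x)) hmax0
    rw [hmax.tsum_eq] at this
    refine (tsum_congr fun x => ?_).trans_le this
    rw [← sqrt_mul (le_min (hμ0 x) (hν0 x)), min_mul_max]
  calc bhattacharyya μ ν ^ 2 ≤ (√s * √(2 - s)) ^ 2 := by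
        gcongr; exact tsum_nonneg fun _ => sqrt_nonneg _
    _ = s * (2 - s) := by rw [mul_pow, sq_sqrt hmin0, sq_sqrt (hmax.nonneg hmax0)]
    _ ≤ 2 * (1 - dTV μ ν) := by rw [one_sub_dTV_eq_tsum_min hμ0 hν0 hμ1 hν1]; nlinarith

theorem dH_sq_eq_two_sub_two_mul_bhattacharyya :
    dH μ ν ^ 2 = 2 - 2 * bhattacharyya μ ν := by
  have hsq (x) : (√(μ x) - √(ν x)) ^ 2 = (μ x + ν x) - 2 * √(μ x * ν x) := by
    rw [sub_sq, sq_sqrt (hμ0 x), sq_sqrt (hν0 x), sqrt_mul (hμ0 x)]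
    ring
  have hsum : HasSum (fun x => (√(μ x) - √(ν x)) ^ 2) (2 - 2 * bhattacharyya μ ν) := by
    simpa only [hsq, one_add_one_eq_two, bhattacharyya] using (hμ1.add hν1).sub
      ((summable_sqrt_mul hμ1.summable hν1.summable hμ0 hν0).hasSum.mul_left 2)
  rw [dH, sq_sqrt (tsum_nonneg fun x => sq_nonneg _), hsum.tsum_eq]

end ProbabilityVectors

theorem bhattacharyya_fin_pi {X : Type*} {μ ν : X → ℝ} (hμ0 : ∀ x, 0 ≤ μ x)
    (hν0 : ∀ x, 0 ≤ ν x) (hμ : Summable μ) (hν : Summable ν) (m : ℕ) :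
    bhattacharyya (fun x : Fin m → X => ∏ i, μ (x i)) (fun x : Fin m → X => ∏ i, ν (x i)) =
      bhattacharyya μ ν ^ m := by
  have hsqrt (x : Fin m → X) :
      √((∏ i, μ (x i)) * ∏ i, ν (x i)) = ∏ i, √(μ (x i) * ν (x i)) := by
    rw [← prod_mul_distrib, sqrt_prod _ fun i _ => mul_nonneg (hμ0 _) (hν0 _)]
  simp only [bhattacharyya, hsqrt]
  exact (hasSum_fin_pi_prod (summable_sqrt_mul hμ hν hμ0 hν0).hasSum
    (fun _ => sqrt_nonneg _) m).tsum_eq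

-- `4 / 7` is the smallest constant `c` with `1 / (1 + c t) ≤ 1 - t / 2` on `[0, 1/4]`.
theorem exp_neg_four_sevenths_mul_le_one_sub_half {t : ℝ} (ht0 : 0 ≤ t) (ht : t ≤ 1 / 4) :
    exp (-(4 / 7 * t)) ≤ 1 - t / 2 := by
  have hpos : 0 < 1 + 4 / 7 * t := by positivity
  calc exp (-(4 / 7 * t)) = (exp (4 / 7 * t))⁻¹ := exp_neg _
    _ ≤ (1 + 4 / 7 * t)⁻¹ := inv_anti₀ hpos (by linarith [add_one_le_exp (4 / 7 * t)])
    _ ≤ 1 - t / 2 := by rw [inv_le_iff_one_le_mul₀ hpos]; nlinarith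

theorem exp_neg_nine_mul_le_one_sub_half_pow {t : ℝ} (ht0 : 0 ≤ t) (ht : t ≤ 1 / 4) {m : ℕ}
    (hm : 1 / 4 ≤ m * t) :
    exp (-(9 * m * t)) ≤ (1 - t / 2) ^ (2 * m) / 2 := by
  have htwo : 2 ≤ exp (55 / 7 * (m * t)) := by linarith [add_one_le_exp (55 / 7 * (m * t))]
  have hsplit : exp (-(9 * m * t)) * exp (55 / 7 * (m * t)) = exp (-(4 / 7 * t)) ^ (2 * m) := by
    rw [← exp_add, ← exp_nat_mul]; push_cast; ring_nf
  calc exp (-(9 * m * t)) ≤ exp (-(9 * m * t)) * exp (55 / 7 * (m * t)) / 2 := by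
        rw [le_div_iff₀ two_pos]; gcongr
    _ ≤ (1 - t / 2) ^ (2 * m) / 2 := by
        rw [hsplit]; gcongr; exact exp_neg_four_sevenths_mul_le_one_sub_half ht0 ht

theorem one_sub_tv_power_ge_of_hellinger_general
    {X : Type*} (μ ν : X → ℝ)
    (hμ0 : ∀ x, 0 ≤ μ x) (hν0 : ∀ x, 0 ≤ ν x)
    (hμ1 : HasSum μ 1) (hν1 : HasSum ν 1)
    (hpos : 0 < dH μ ν) (hle : dH μ ν ≤ 1 / 2)
    (m : ℕ) (hm : 1 / (4 * dH μ ν ^ 2) ≤ (m : ℝ)) :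
    1 - dTV (fun x : Fin m → X => ∏ i, μ (x i))
            (fun x : Fin m → X => ∏ i, ν (x i))
      ≥ Real.exp (-(9 * m * dH μ ν ^ 2)) := by
  have hH := dH_sq_eq_two_sub_two_mul_bhattacharyya hμ0 hν0 hμ1 hν1
  have hP1 := hasSum_fin_pi_prod hμ1 hμ0 m
  have hQ1 := hasSum_fin_pi_prod hν1 hν0 m
  rw [one_pow] at hP1 hQ1
  have hlecam := bhattacharyya_sq_le_two_mul_one_sub_dTV
    (fun x : Fin m → X => prod_nonneg fun i _ => hμ0 (x i))
    (fun x : Fin m → X => prod_nonneg fun i _ => hν0 (x i)) hP1 hQ1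
  rw [bhattacharyya_fin_pi hμ0 hν0 hμ1.summable hν1.summable, ← pow_mul',
    show bhattacharyya μ ν = 1 - dH μ ν ^ 2 / 2 by linarith] at hlecam
  have hmh : 1 / 4 ≤ m * dH μ ν ^ 2 := by
    rwa [div_le_iff₀ (by positivity), mul_left_comm, ← div_le_iff₀' (by norm_num)] at hm
  have := exp_neg_nine_mul_le_one_sub_half_pow (sq_nonneg _) (by nlinarith) hmh
  linarith

theorem one_sub_tv_power_ge_of_hellinger
    {X : Type*} [Countable X] (μ ν : X → ℝ)
    (hμ0 : ∀ x, 0 ≤ μ x) (hν0 : ∀ x, 0 ≤ ν x)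
    (hμ1 : HasSum μ 1) (hν1 : HasSum ν 1)
    (hpos : 0 < dH μ ν) (hle : dH μ ν ≤ 1 / 2)
    (m : ℕ) (hm : 1 / (4 * dH μ ν ^ 2) ≤ (m : ℝ)) :
    1 - dTV (fun x : Fin m → X => ∏ i, μ (x i))
            (fun x : Fin m → X => ∏ i, ν (x i))
      ≥ Real.exp (-(9 * m * dH μ ν ^ 2)) :=
  one_sub_tv_power_ge_of_hellinger_general μ ν hμ0 hν0 hμ1 hν1 hpos hle m hm
end

section
/- Let X and Y be discrete real-valued random variables such that for all r > 0, P[|X| > r] ≤ 2·exp(−r²) and P[|Y| > r] ≤ 2·exp(−r²). Then |E[X] − E[Y]| ≤ 4·δ·sqrt(log(2/δ)), where δ = d_TV(X, Y) (assumed positive). -/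
open scoped Classical

/-!
With `d = |μ - ν|` we have `∑ d = 2δ` and `|E X - E Y| ≤ ∑ |x| d(x)`. Slicing `|x|` into shells of
width `h` bounds the latter by `h ∑ₙ D(n h)`, where `D(t)` is the `d`-mass of `{|x| > t}`. Now
`D(t) ≤ 2δ` always, and `D(t) ≤ 4 exp(-t²) = 2δ exp(r² - t²)` with `r = √(log (2/δ))`; using the
first bound below `r` and the second, which decays geometrically in `n`, above `r` gives
`2δ (r + 2h + 1/(2r))`. For `h = 1/(16 r)` this is at most `4δr` because `r² ≥ log 2 > 5/8`.
-/

open Real Finset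

noncomputable def tailMass (d : ℝ → ℝ) (t : ℝ) : ℝ := ∑' x, if t < |x| then d x else 0

section TailMass

variable {d : ℝ → ℝ}

lemma summable_ite_lt_abs (hd : Summable d) (t : ℝ) :
    Summable fun x => if t < |x| then d x else 0 :=
  (hd.indicator {x | t < |x|}).congr fun x => by simp [Set.indicator_apply]

lemma tailMass_nonneg (hd0 : ∀ x, 0 ≤ d x) (t : ℝ) : 0 ≤ tailMass d t :=
  tsum_nonneg fun x => by split_ifs <;> simp [hd0 x]

lemma tailMass_le_tsum (hd0 : ∀ x, 0 ≤ d x) (hd : Summable d) (t : ℝ) :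
    tailMass d t ≤ ∑' x, d x :=
  (summable_ite_lt_abs hd t).tsum_le_tsum (fun x => by split_ifs <;> simp [hd0 x]) hd

lemma tailMass_abs_sub_le {μ ν : ℝ → ℝ} (hμ0 : ∀ x, 0 ≤ μ x) (hν0 : ∀ x, 0 ≤ ν x)
    (hμ : Summable μ) (hν : Summable ν) (t : ℝ) :
    tailMass (fun x => |μ x - ν x|) t ≤ tailMass μ t + tailMass ν t := by
  rw [tailMass, tailMass, tailMass,
    ← (summable_ite_lt_abs hμ t).tsum_add (summable_ite_lt_abs hν t)]
  refine (summable_ite_lt_abs (hμ.sub hν).abs t).tsum_le_tsum (fun x => ?_)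
    ((summable_ite_lt_abs hμ t).add (summable_ite_lt_abs hν t))
  split_ifs
  · exact (abs_sub _ _).trans_eq (by rw [abs_of_nonneg (hμ0 x), abs_of_nonneg (hν0 x)])
  · simp

end TailMass

section LayerCake

variable {d : ℝ → ℝ} {h : ℝ}

lemma tsum_ite_natCast_mul_lt (hh : 0 < h) (s a : ℝ) :
    ∑' n : ℕ, (if n * h < s then a else 0) = ⌈s / h⌉₊ * a := by
  have hiff : ∀ n : ℕ, n * h < s ↔ n < ⌈s / h⌉₊ := fun n => by
    rw [Nat.lt_ceil, lt_div_iff₀ hh]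
  simp_rw [hiff]
  rw [tsum_eq_sum (s := range ⌈s / h⌉₊) fun n hn => if_neg (mem_range.not.1 hn),
    sum_congr rfl fun n hn => if_pos (mem_range.1 hn)]
  simp

lemma abs_mul_le_mul_tsum_ite (hh : 0 < h) {x : ℝ} (hx : 0 ≤ d x) :
    |x| * d x ≤ h * ∑' n : ℕ, (if n * h < |x| then d x else 0) := by
  rw [tsum_ite_natCast_mul_lt hh, ← mul_assoc]
  gcongr
  rw [mul_comm, ← div_le_iff₀ hh]
  exact Nat.le_ceil _

lemma summable_uncurry_ite_lt_abs (hd0 : ∀ x, 0 ≤ d x) (hd : Summable d)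
    (hT : Summable fun n : ℕ => tailMass d (n * h)) :
    Summable (Function.uncurry fun (n : ℕ) x => if n * h < |x| then d x else 0) := by
  refine (summable_prod_of_nonneg fun p => ?_).2 ⟨fun n => ?_, ?_⟩
  · dsimp only [Function.uncurry, Pi.zero_apply]
    split_ifs <;> simp [hd0 p.2]
  · exact summable_ite_lt_abs hd (n * h)
  · exact hT

lemma summable_abs_mul_of_summable_tailMass (hd0 : ∀ x, 0 ≤ d x) (hd : Summable d)
    (hh : 0 < h) (hT : Summable fun n : ℕ => tailMass d (n * h)) : Summable fun x => |x| * d x :=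
  .of_nonneg_of_le (fun x => mul_nonneg (abs_nonneg x) (hd0 x))
    (fun x => abs_mul_le_mul_tsum_ite hh (hd0 x))
    ((summable_uncurry_ite_lt_abs hd0 hd hT).prod_symm.prod.mul_left h)

lemma tsum_abs_mul_le_mul_tsum_tailMass (hd0 : ∀ x, 0 ≤ d x) (hd : Summable d)
    (hh : 0 < h) (hT : Summable fun n : ℕ => tailMass d (n * h)) :
    ∑' x, |x| * d x ≤ h * ∑' n : ℕ, tailMass d (n * h) := by
  have hF := summable_uncurry_ite_lt_abs hd0 hd hT
  calc ∑' x, |x| * d x ≤ ∑' x, h * ∑' n : ℕ, (if n * h < |x| then d x else 0) :=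
        (summable_abs_mul_of_summable_tailMass hd0 hd hh hT).tsum_le_tsum
          (fun x => abs_mul_le_mul_tsum_ite hh (hd0 x)) (hF.prod_symm.prod.mul_left h)
    _ = h * ∑' n : ℕ, tailMass d (n * h) := by rw [tsum_mul_left, hF.tsum_comm]; rfl

end LayerCake

lemma inv_one_sub_exp_neg_le {a : ℝ} (ha : 0 < a) : (1 - exp (-a))⁻¹ ≤ 1 + a⁻¹ := by
  have hexp : (1 + a) * exp (-a) ≤ 1 := by
    calc (1 + a) * exp (-a) ≤ exp a * exp (-a) := by gcongr; linarith [add_one_le_exp a]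
      _ = 1 := by rw [← exp_add, add_neg_cancel, exp_zero]
  rw [inv_le_comm₀ (by nlinarith) (by positivity),
    show (1 + a⁻¹)⁻¹ = a / (1 + a) by field_simp; ring, div_le_iff₀ (by linarith)]
  nlinarith

section GaussianTail

variable {T : ℕ → ℝ} {c r h : ℝ}

lemma le_geometric_of_le_exp (hr : 0 ≤ r) (hh : 0 < h) (hc : 0 ≤ c)
    (hT : ∀ n : ℕ, r ≤ n * h → T n ≤ c * exp (r ^ 2 - (n * h) ^ 2)) (i : ℕ) :
    T (i + ⌈r / h⌉₊) ≤ c * exp (-(2 * r * h)) ^ i := by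
  have hN : r ≤ ⌈r / h⌉₊ * h := (div_le_iff₀ hh).1 (Nat.le_ceil _)
  have hih : 0 ≤ (i : ℝ) * h := by positivity
  have hn : r + i * h ≤ ((i + ⌈r / h⌉₊ : ℕ) : ℝ) * h := by push_cast; linarith
  refine (hT _ (by linarith)).trans ?_
  rw [← exp_nat_mul]
  gcongr
  nlinarith

lemma summable_of_le_exp (hr : 0 < r) (hh : 0 < h) (hc : 0 ≤ c) (hT0 : ∀ n, 0 ≤ T n)
    (hT : ∀ n : ℕ, r ≤ n * h → T n ≤ c * exp (r ^ 2 - (n * h) ^ 2)) : Summable T :=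
  (summable_nat_add_iff ⌈r / h⌉₊).1 <| .of_nonneg_of_le (fun i => hT0 _)
    (le_geometric_of_le_exp hr.le hh hc hT)
    ((summable_geometric_of_lt_one (exp_pos _).le
      (exp_lt_one_iff.2 (by nlinarith))).mul_left c)

lemma mul_tsum_le_of_le_exp (hr : 0 < r) (hh : 0 < h) (hT0 : ∀ n, 0 ≤ T n) (hTc : ∀ n, T n ≤ c)
    (hT : ∀ n : ℕ, r ≤ n * h → T n ≤ c * exp (r ^ 2 - (n * h) ^ 2)) :
    h * ∑' n, T n ≤ c * (r + 2 * h + (2 * r)⁻¹) := by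
  have hc : 0 ≤ c := (hT0 0).trans (hTc 0)
  set N := ⌈r / h⌉₊
  set q := exp (-(2 * r * h))
  have hq0 : 0 ≤ q := (exp_pos _).le
  have hq1 : q < 1 := exp_lt_one_iff.2 (by nlinarith)
  have hhead : ∑ n ∈ range N, T n ≤ N * c := by
    simpa using sum_le_sum fun n (_ : n ∈ range N) => hTc n
  have htail : ∑' i, T (i + N) ≤ c * (1 + (2 * r * h)⁻¹) := calc
    ∑' i, T (i + N) ≤ ∑' i, c * q ^ i :=
      ((summable_nat_add_iff N).2 (summable_of_le_exp hr hh hc hT0 hT)).tsum_le_tsum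
        (le_geometric_of_le_exp hr.le hh hc hT)
        ((summable_geometric_of_lt_one hq0 hq1).mul_left c)
    _ = c * (1 - q)⁻¹ := by rw [tsum_mul_left, tsum_geometric_of_lt_one hq0 hq1]
    _ ≤ c * (1 + (2 * r * h)⁻¹) := by gcongr; exact inv_one_sub_exp_neg_le (by positivity)
  have hNh : N * h ≤ r + h := by
    calc N * h ≤ (r / h + 1) * h := by gcongr; exact (Nat.ceil_lt_add_one (by positivity)).le
      _ = r + h := by field_simp
  rw [← (summable_of_le_exp hr hh hc hT0 hT).sum_add_tsum_nat_add N]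
  calc h * (∑ n ∈ range N, T n + ∑' i, T (i + N))
      ≤ h * (N * c + c * (1 + (2 * r * h)⁻¹)) := by gcongr
    _ = c * (N * h + h + (2 * r)⁻¹) := by field_simp; ring
    _ ≤ c * (r + 2 * h + (2 * r)⁻¹) := by gcongr c * ?_; linarith

end GaussianTail

lemma summable_mul_of_tailMass_le {d : ℝ → ℝ} (hd0 : ∀ x, 0 ≤ d x) (hd : Summable d)
    (htail : ∀ r : ℝ, 0 < r → tailMass d r ≤ 2 * exp (-r ^ 2)) :
    Summable fun x => x * d x := by
  have hT : Summable fun n : ℕ => tailMass d (n * 1) :=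
    summable_of_le_exp one_pos one_pos zero_le_two (fun n => tailMass_nonneg hd0 _)
      fun n hn => (htail _ (by linarith)).trans (by gcongr; linarith)
  refine .of_norm ?_
  simpa only [Real.norm_eq_abs, abs_mul, abs_of_nonneg (hd0 _)] using
    summable_abs_mul_of_summable_tailMass hd0 hd one_pos hT

section TotalVariation

variable {α : Type*} {μ ν : α → ℝ}

lemma tsum_abs_sub_eq_two_mul_dTV : ∑' x, |μ x - ν x| = 2 * dTV μ ν := by
  rw [dTV]; ring

lemma dTV_le_one (hμ0 : ∀ x, 0 ≤ μ x) (hν0 : ∀ x, 0 ≤ ν x) (hμ1 : HasSum μ 1)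
    (hν1 : HasSum ν 1) : dTV μ ν ≤ 1 := by
  have : ∑' x, |μ x - ν x| ≤ ∑' x, (μ x + ν x) :=
    (hμ1.summable.sub hν1.summable).abs.tsum_le_tsum
      (fun x => (abs_sub _ _).trans_eq (by rw [abs_of_nonneg (hμ0 x), abs_of_nonneg (hν0 x)]))
      (hμ1.summable.add hν1.summable)
  rw [tsum_abs_sub_eq_two_mul_dTV, hμ1.summable.tsum_add hν1.summable, hμ1.tsum_eq,
    hν1.tsum_eq] at this
  linarith

end TotalVariation

lemma abs_tsum_mul_sub_tsum_mul_le {μ ν : ℝ → ℝ} (hμ : Summable fun x => x * μ x)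
    (hν : Summable fun x => x * ν x) (hd : Summable fun x => |x| * |μ x - ν x|) :
    |∑' x, x * μ x - ∑' x, x * ν x| ≤ ∑' x, |x| * |μ x - ν x| := by
  rw [← hμ.tsum_sub hν]
  simpa only [Real.norm_eq_abs, ← mul_sub, abs_mul] using norm_tsum_le_tsum_norm
    (f := fun x => x * μ x - x * ν x)
    (by simpa only [Real.norm_eq_abs, ← mul_sub, abs_mul] using hd)

lemma tailMass_abs_sub_le_four_mul_exp {μ ν : ℝ → ℝ} (hμ0 : ∀ x, 0 ≤ μ x) (hν0 : ∀ x, 0 ≤ ν x)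
    (hμ : Summable μ) (hν : Summable ν)
    (hμtail : ∀ r : ℝ, 0 < r → tailMass μ r ≤ 2 * exp (-r ^ 2))
    (hνtail : ∀ r : ℝ, 0 < r → tailMass ν r ≤ 2 * exp (-r ^ 2)) {t : ℝ} (ht : 0 < t) :
    tailMass (fun x => |μ x - ν x|) t ≤ 4 * exp (-t ^ 2) := by
  linarith [tailMass_abs_sub_le hμ0 hν0 hμ hν t, hμtail t ht, hνtail t ht]

lemma five_div_eight_le_log_two_div {δ : ℝ} (hδ : 0 < δ) (hδ1 : δ ≤ 1) :
    5 / 8 ≤ log (2 / δ) :=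
  (by linarith [log_two_gt_d9] : (5 / 8 : ℝ) ≤ log 2).trans
    (log_le_log two_pos (le_div_self zero_le_two hδ hδ1))

theorem mean_diff_le_of_tails_general
    (μ ν : ℝ → ℝ)
    (hμ0 : ∀ x, 0 ≤ μ x) (hν0 : ∀ x, 0 ≤ ν x)
    (hμ1 : HasSum μ 1) (hν1 : HasSum ν 1)
    (hμtail : ∀ r : ℝ, 0 < r → ∑' x, (if r < |x| then μ x else 0) ≤ 2 * Real.exp (-r ^ 2))
    (hνtail : ∀ r : ℝ, 0 < r → ∑' x, (if r < |x| then ν x else 0) ≤ 2 * Real.exp (-r ^ 2))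
    (hδ : 0 < dTV μ ν) :
    |(∑' x, x * μ x) - ∑' x, x * ν x|
      ≤ 4 * dTV μ ν * Real.sqrt (Real.log (2 / dTV μ ν)) := by
  set δ := dTV μ ν
  set r := √(log (2 / δ))
  set d := fun x => |μ x - ν x|
  have hlog := five_div_eight_le_log_two_div hδ (dTV_le_one hμ0 hν0 hμ1 hν1)
  have hr2 : r ^ 2 = log (2 / δ) := sq_sqrt (by linarith)
  have hr : 0 < r := sqrt_pos.2 (by linarith)
  have hd0 : ∀ x, 0 ≤ d x := fun x => abs_nonneg _
  have hd : Summable d := (hμ1.summable.sub hν1.summable).abs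
  set h := (16 * r)⁻¹
  have hh : 0 < h := by positivity
  have hTc : ∀ n : ℕ, tailMass d (n * h) ≤ 2 * δ := fun n =>
    (tailMass_le_tsum hd0 hd _).trans_eq tsum_abs_sub_eq_two_mul_dTV
  have hTexp : ∀ n : ℕ, r ≤ n * h → tailMass d (n * h) ≤ 2 * δ * exp (r ^ 2 - (n * h) ^ 2) :=
    fun n hn => (tailMass_abs_sub_le_four_mul_exp hμ0 hν0 hμ1.summable hν1.summable hμtail hνtail
      (by linarith)).trans_eq <| by
        rw [exp_sub, hr2, exp_log (by positivity), exp_neg]; field_simp; norm_num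
  have hT : Summable fun n : ℕ => tailMass d (n * h) :=
    summable_of_le_exp hr hh (by positivity) (fun n => tailMass_nonneg hd0 _) hTexp
  calc |(∑' x, x * μ x) - ∑' x, x * ν x| ≤ ∑' x, |x| * d x :=
        abs_tsum_mul_sub_tsum_mul_le (summable_mul_of_tailMass_le hμ0 hμ1.summable hμtail)
          (summable_mul_of_tailMass_le hν0 hν1.summable hνtail)
          (summable_abs_mul_of_summable_tailMass hd0 hd hh hT)
    _ ≤ h * ∑' n : ℕ, tailMass d (n * h) := tsum_abs_mul_le_mul_tsum_tailMass hd0 hd hh hT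
    _ ≤ 2 * δ * (r + 2 * h + (2 * r)⁻¹) :=
        mul_tsum_le_of_le_exp hr hh (fun n => tailMass_nonneg hd0 _) hTc hTexp
    _ ≤ 4 * δ * r := by
        have : 2 * h + (2 * r)⁻¹ = 5 / 8 / r := by simp only [h]; field_simp; ring
        have : 5 / 8 / r ≤ r := by rw [div_le_iff₀ hr]; nlinarith
        nlinarith

theorem mean_diff_le_of_tails
    (μ ν : ℝ → ℝ)
    (hμ0 : ∀ x, 0 ≤ μ x) (hν0 : ∀ x, 0 ≤ ν x)
    (hμ1 : HasSum μ 1) (hν1 : HasSum ν 1)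
    (hμint : Summable (fun x => x * μ x)) (hνint : Summable (fun x => x * ν x))
    (hμtail : ∀ r : ℝ, 0 < r → ∑' x, (if r < |x| then μ x else 0) ≤ 2 * Real.exp (-r ^ 2))
    (hνtail : ∀ r : ℝ, 0 < r → ∑' x, (if r < |x| then ν x else 0) ≤ 2 * Real.exp (-r ^ 2))
    (hδ : 0 < dTV μ ν) :
    |(∑' x, x * μ x) - ∑' x, x * ν x|
      ≤ 4 * dTV μ ν * Real.sqrt (Real.log (2 / dTV μ ν)) :=
  mean_diff_le_of_tails_general μ ν hμ0 hν0 hμ1 hν1 hμtail hνtail hδ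
end
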